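/- Let N be a positive integer and γ ∈ ℂ with |γ| = 1. For every α ∈ ℂ² ∖ {0}, z ∈ ℂ and n ≥ 1 one has the identity S_n^γ(α, z) = |a_{n+N−1}| · Q̃_n^{z,γ}((u_{n+N−1}, u_{n+N})), where u is the generalised eigenvector associated with z with (u_0, u_1) = α and Q̃_n^{z,γ}(v) = ⟨sym[(a_{n+N−1}/(γ·|a_{n+N−1}|)) · conj(a_{n+N−1}/a_{n−1}) · E · conj(X_n(z))]·v, v⟩. -/

import Mathlib

/-
With `w = (u_{n-1}, u_n)` one has `X_n(z) w = (u_{n+N-1}, u_{n+N})`, and every `2 × 2` matrix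
satisfies `Xᵀ E X = det X • E`, so `Xᴴ E conj(X) = conj(det X) • E`. Hence
`⟨E conj(X) X w, X w⟩ = conj(det X) ⟨E X w, w⟩`, and `det X_n(z) = a_{n-1} / a_{n+N-1}` is exactly
cancelled by the factor `conj(a_{n+N-1} / a_{n-1})` in the definition of `Q̃`.
-/

open Filter Matrix Topology

noncomputable section

/-- The operator norm of a 2×2 complex matrix (as operator on Euclidean ℂ²). -/
noncomputable def opNorm (X : Matrix (Fin 2) (Fin 2) ℂ) : ℝ :=
  ‖Matrix.toEuclideanCLM (𝕜 := ℂ) X‖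

/-- Entrywise complex conjugation of a matrix. -/
def mconj (X : Matrix (Fin 2) (Fin 2) ℂ) : Matrix (Fin 2) (Fin 2) ℂ :=
  X.map (starRingEnd ℂ)

/-- Hermitian symmetrisation. -/
def symQ (X : Matrix (Fin 2) (Fin 2) ℂ) : Matrix (Fin 2) (Fin 2) ℂ :=
  (2⁻¹ : ℂ) • (X + Xᴴ)

def Ematrix : Matrix (Fin 2) (Fin 2) ℂ := !![0, -1; 1, 0]

/-- One-step transfer matrix `B_j(z)`. -/
def Bmat (a b : ℕ → ℂ) (j : ℕ) (z : ℂ) : Matrix (Fin 2) (Fin 2) ℂ :=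
  !![0, 1; -(a (j-1) / a j), (z - b j) / a j]

/-- `N`-step transfer matrix `X_n(z) = B_{n+N-1}(z) ⋯ B_n(z)`. -/
def transfer (a b : ℕ → ℂ) (N n : ℕ) (z : ℂ) : Matrix (Fin 2) (Fin 2) ℂ :=
  (((List.range N).map fun j => Bmat a b (n + j) z).reverse).prod

/-- Generalised eigenvector associated with `z`. -/
def IsGenEigen (a b : ℕ → ℂ) (z : ℂ) (u : ℕ → ℂ) : Prop :=
  ¬(u 0 = 0 ∧ u 1 = 0) ∧
    ∀ n, 1 ≤ n → z * u n = a n * u (n+1) + b n * u n + a (n-1) * u (n-1)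

/-- The twisted Stolz class `D̃₁(K, GL(2,ℂ))`. -/
def MemD1K (K : Set ℂ) (Y : ℕ → ℂ → Matrix (Fin 2) (Fin 2) ℂ) : Prop :=
  (∀ n, 1 ≤ n → ContinuousOn (Y n) K) ∧
  (∀ n, 1 ≤ n → ∀ z ∈ K, IsUnit (Y n z)) ∧
  (∃ C : ℝ, ∀ n, 1 ≤ n → ∀ z ∈ K, opNorm (Y n z) ≤ C) ∧
  (∃ g : ℕ → ℝ, Summable g ∧ ∀ n, 1 ≤ n → ∀ z ∈ K,
      opNorm (Y (n+1) z - mconj (Y n z)) ≤ g n)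

/-- The twisted Stolz class `D̃₁(ℂ)` for scalar sequences `(x_n : n ≥ 1)`. -/
def MemD1 (x : ℕ → ℂ) : Prop :=
  (∃ C : ℝ, ∀ n, 1 ≤ n → ‖x n‖ ≤ C) ∧
    Summable (fun n : ℕ => ‖x (n+2) - (starRingEnd ℂ) (x (n+1))‖)

def MemD1N (N : ℕ) (x : ℕ → ℂ) : Prop := ∀ i < N, MemD1 (fun n => x (n*N+i))

/-- The quadratic form `v ↦ ⟨M v, v⟩`. -/
def Qform (M : Matrix (Fin 2) (Fin 2) ℂ) (v : Fin 2 → ℂ) : ℂ :=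
  dotProduct (star v) (M.mulVec v)

def Qgam (a b : ℕ → ℂ) (N : ℕ) (γ : ℂ) (n : ℕ) (z : ℂ) (v : Fin 2 → ℂ) : ℂ :=
  Qform (symQ ((a (n+N-1) / (γ * (‖a (n+N-1)‖ : ℂ))) • (Ematrix * transfer a b N n z))) v

def Qtil (a b : ℕ → ℂ) (N : ℕ) (γ : ℂ) (n : ℕ) (z : ℂ) (v : Fin 2 → ℂ) : ℂ :=
  Qform (symQ ((a (n+N-1) / (γ * (‖a (n+N-1)‖ : ℂ)) *
      (starRingEnd ℂ) (a (n+N-1) / a (n-1))) • (Ematrix * mconj (transfer a b N n z)))) v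

/-- The `N`-shifted Turán determinant, expressed via a generalised eigenvector `u`. -/
def Sdet (a b : ℕ → ℂ) (N : ℕ) (γ : ℂ) (z : ℂ) (u : ℕ → ℂ) (n : ℕ) : ℂ :=
  (‖a (n+N-1)‖ : ℂ) * Qgam a b N γ n z ![u (n-1), u n]

/-- Uniform non-degeneracy of a family of quadratic forms. -/
def UnifNonDeg (K : Set ℂ) (Q : ℕ → ℂ → (Fin 2 → ℂ) → ℂ) : Prop :=
  ∃ c₁ > (0:ℝ), ∃ c₂ > (0:ℝ), ∃ M : ℕ, 1 ≤ M ∧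
    ∀ v : Fin 2 → ℂ, ∀ z ∈ K, ∀ n, M ≤ n →
      c₁ * (‖v 0‖^2 + ‖v 1‖^2) ≤ ‖Q n z v‖ ∧ ‖Q n z v‖ ≤ c₂ * (‖v 0‖^2 + ‖v 1‖^2)

def RealEntries (X : Matrix (Fin 2) (Fin 2) ℂ) : Prop := ∀ p q, (X p q).im = 0

def discr (X : Matrix (Fin 2) (Fin 2) ℂ) : ℂ := (Matrix.trace X)^2 - 4 * X.det

/-- Periodic one-step matrix `𝔅_j(x)` (real). -/
def pB (α β : ℤ → ℝ) (j : ℤ) (x : ℝ) : Matrix (Fin 2) (Fin 2) ℝ :=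
  !![0, 1; -(α (j-1) / α j), (x - β j) / α j]

/-- Periodic transfer matrix `𝔛_i(x) = 𝔅_{i+N-1}(x) ⋯ 𝔅_i(x)`. -/
def pX (α β : ℤ → ℝ) (N : ℕ) (i : ℤ) (x : ℝ) : Matrix (Fin 2) (Fin 2) ℝ :=
  (((List.range N).map fun j => pB α β (i + j) x).reverse).prod

/-- The generalised eigenvector with initial data `α`. -/
def gev (a b : ℕ → ℂ) (z : ℂ) (α : Fin 2 → ℂ) : ℕ → ℂ
  | 0 => α 0
  | 1 => α 1
  | n+2 => ((z - b (n+1)) * gev a b z α (n+1) - a n * gev a b z α n) / a (n+1)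

end

lemma transfer_succ (a b : ℕ → ℂ) (N n : ℕ) (z : ℂ) :
    transfer a b (N + 1) n z = Bmat a b (n + N) z * transfer a b N n z := by
  simp [transfer, List.range_succ]

lemma det_Bmat (a b : ℕ → ℂ) (j : ℕ) (z : ℂ) : (Bmat a b j z).det = a (j - 1) / a j := by
  simp [Bmat, Matrix.det_fin_two_of]

lemma det_transfer (a b : ℕ → ℂ) (ha : ∀ n, a n ≠ 0) (N n : ℕ) (z : ℂ) :
    (transfer a b N n z).det = a (n - 1) / a (n + N - 1) := by
  induction N with
  | zero => simp [transfer, div_self (ha _)]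
  | succ N ih =>
    rw [transfer_succ, Matrix.det_mul, det_Bmat, ih, ← add_assoc, Nat.add_sub_cancel]
    field_simp [ha (n + N - 1)]

lemma Bmat_mulVec (a b : ℕ → ℂ) (ha : ∀ n, a n ≠ 0) (z : ℂ) (u : ℕ → ℂ) (j : ℕ)
    (hj : z * u j = a j * u (j + 1) + b j * u j + a (j - 1) * u (j - 1)) :
    Bmat a b j z *ᵥ ![u (j - 1), u j] = ![u j, u (j + 1)] := by
  ext i
  fin_cases i
  · simp [Bmat, Matrix.mulVec, dotProduct]
  · simp only [Bmat, Matrix.mulVec, dotProduct, Fin.sum_univ_two, Matrix.of_apply,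
      Fin.mk_one, Matrix.cons_val_one, Matrix.cons_val_zero, Fin.isValue]
    field_simp [ha j]
    linear_combination hj

lemma transfer_mulVec (a b : ℕ → ℂ) (ha : ∀ n, a n ≠ 0) (z : ℂ) (u : ℕ → ℂ)
    (hu : ∀ m, 1 ≤ m → z * u m = a m * u (m + 1) + b m * u m + a (m - 1) * u (m - 1))
    (N n : ℕ) (hn : 1 ≤ n) :
    transfer a b N n z *ᵥ ![u (n - 1), u n] = ![u (n + N - 1), u (n + N)] := by
  induction N with
  | zero => simp [transfer]
  | succ N ih =>
    rw [transfer_succ, ← Matrix.mulVec_mulVec, ih, Bmat_mulVec a b ha z u _ (hu _ (by omega)),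
      ← add_assoc, Nat.add_sub_cancel]

lemma conjTranspose_mul_Ematrix_mul_mconj (X : Matrix (Fin 2) (Fin 2) ℂ) :
    Xᴴ * Ematrix * mconj X = starRingEnd ℂ X.det • Ematrix := by
  ext i j
  fin_cases i <;> fin_cases j <;>
    simp [Ematrix, mconj, Matrix.det_fin_two, Matrix.mul_apply, Fin.sum_univ_two] <;> ring

lemma Qform_mulVec (M X : Matrix (Fin 2) (Fin 2) ℂ) (v : Fin 2 → ℂ) :
    Qform M (X *ᵥ v) = Qform (Xᴴ * M * X) v := by
  simp only [Qform, Matrix.star_mulVec, ← Matrix.dotProduct_mulVec, Matrix.mulVec_mulVec,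
    Matrix.mul_assoc]

lemma Qform_smul (c : ℂ) (M : Matrix (Fin 2) (Fin 2) ℂ) (v : Fin 2 → ℂ) :
    Qform (c • M) v = c * Qform M v := by
  rw [Qform, Qform, Matrix.smul_mulVec, dotProduct_smul, smul_eq_mul]

lemma Qform_symQ (M : Matrix (Fin 2) (Fin 2) ℂ) (v : Fin 2 → ℂ) :
    Qform (symQ M) v = 2⁻¹ * (Qform M v + starRingEnd ℂ (Qform M v)) := by
  have hadj : star v ⬝ᵥ (Mᴴ *ᵥ v) = starRingEnd ℂ (star v ⬝ᵥ (M *ᵥ v)) := by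
    rw [star_dotProduct, Matrix.star_mulVec, Matrix.conjTranspose_conjTranspose,
      ← Matrix.dotProduct_mulVec, Complex.star_def]
  rw [Qform, Qform, symQ, Matrix.smul_mulVec, Matrix.add_mulVec, dotProduct_smul, dotProduct_add,
    hadj, smul_eq_mul]

lemma Qform_Ematrix_mconj_mulVec (X : Matrix (Fin 2) (Fin 2) ℂ) (v : Fin 2 → ℂ) :
    Qform (Ematrix * mconj X) (X *ᵥ v) = starRingEnd ℂ X.det * Qform (Ematrix * X) v := by
  rw [Qform_mulVec, ← Matrix.mul_assoc, conjTranspose_mul_Ematrix_mul_mconj, Matrix.smul_mul,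
    Qform_smul]

open Filter Matrix Topology in
theorem statement6_general
    (a b : ℕ → ℂ) (ha : ∀ n, a n ≠ 0)
    (N : ℕ) (γ : ℂ)
    (z : ℂ) (u : ℕ → ℂ) (hu : IsGenEigen a b z u)
    (n : ℕ) (hn : 1 ≤ n) :
    Sdet a b N γ z u n =
      (‖a (n+N-1)‖ : ℂ) * Qtil a b N γ n z ![u (n+N-1), u (n+N)] := by
  have hratio : starRingEnd ℂ (a (n + N - 1) / a (n - 1)) *
      starRingEnd ℂ (a (n - 1) / a (n + N - 1)) = 1 := by
    rw [← map_mul, div_mul_div_cancel₀ (ha _), div_self (ha _), map_one]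
  rw [Sdet, Qgam, Qtil, ← transfer_mulVec a b ha z u hu.2 N n hn, Qform_symQ, Qform_symQ,
    Qform_smul, Qform_smul, Qform_Ematrix_mconj_mulVec, det_transfer a b ha, mul_assoc,
    ← mul_assoc (starRingEnd ℂ _), hratio, one_mul]

open Filter Matrix Topology in
/-- Proposition 6: the alternative formula for the shifted Turán determinant. -/
theorem statement6
    (a b : ℕ → ℂ) (ha : ∀ n, a n ≠ 0)
    (N : ℕ) (hN : 1 ≤ N) (γ : ℂ) (hγ : ‖γ‖ = 1)
    (z : ℂ) (u : ℕ → ℂ) (hu : IsGenEigen a b z u)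
    (n : ℕ) (hn : 1 ≤ n) :
    Sdet a b N γ z u n =
      (‖a (n+N-1)‖ : ℂ) * Qtil a b N γ n z ![u (n+N-1), u (n+N)] :=
  statement6_general a b ha N γ z u hu n hn
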